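/- arXiv:2603.11304 — 4 statements merged into one kernel-verified Lean document; each statement's English description precedes it below -/
import Mathlib

section
/- Let Σ₁, ..., Σ_E and Σ̂₁, ..., Σ̂_E be symmetric positive semidefinite p×p matrices with τ := min_e Tr(Σ_e) > 0 and Tr(Σ̂_e) > 0 for all e. Then for every orthonormal V ∈ ℝ^{p×k} and every e, | Tr(Vᵀ Σ̂_e V)/Tr(Σ̂_e) − Tr(Vᵀ Σ_e V)/Tr(Σ_e) | ≤ ((√k + √p)/τ) · ‖Σ̂_e − Σ_e‖_F. -/
/-!
Both normalized quantities are ratios of Frobenius inner products: `Tr(Vᵀ M V) = ⟨V Vᵀ, M⟩_F` and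
`Tr M = ⟨1, M⟩_F`, where `‖V Vᵀ‖_F = √k` and `‖1‖_F = √p`. Cauchy–Schwarz therefore controls both the
numerators and the denominators by the Frobenius distance `‖Σ̂ − Σ‖_F`. The ratio
`Tr(Vᵀ Σ̂ V) / Tr Σ̂` lies in `[0, 1]` because `V Vᵀ` is an orthogonal projection and `Σ̂ ⪰ 0`, so
the perturbation of the denominator costs at most `√p ‖Σ̂ − Σ‖_F / Tr Σ ≤ √p ‖Σ̂ − Σ‖_F / τ`.
-/

open Matrix Finset

namespace Matrix

variable {m n : Type*} [Fintype m] [Fintype n]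

lemma trace_transpose_mul_eq_sum (A B : Matrix m n ℝ) :
    (Aᵀ * B).trace = ∑ ij : m × n, A ij.1 ij.2 * B ij.1 ij.2 := by
  simp [trace, mul_apply, Fintype.sum_prod_type_right]

lemma abs_trace_transpose_mul_le (A B : Matrix m n ℝ) :
    |(Aᵀ * B).trace| ≤ √(Aᵀ * A).trace * √(Bᵀ * B).trace := by
  simp only [trace_transpose_mul_eq_sum, ← sq]
  refine (abs_sum_le_sum_abs _ _).trans ?_
  simpa only [abs_mul, sq_abs] using
    Real.sum_mul_le_sqrt_mul_sqrt univ (fun ij : m × n => |A ij.1 ij.2|) (fun ij => |B ij.1 ij.2|)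

lemma abs_trace_le_sqrt_card_mul [DecidableEq n] (M : Matrix n n ℝ) :
    |M.trace| ≤ √(Fintype.card n) * √(Mᵀ * M).trace := by
  simpa using abs_trace_transpose_mul_le (1 : Matrix n n ℝ) M

lemma abs_trace_transpose_mul_mul_le [DecidableEq n] {V : Matrix m n ℝ} (hV : Vᵀ * V = 1)
    (M : Matrix m m ℝ) :
    |(Vᵀ * M * V).trace| ≤ √(Fintype.card n) * √(Mᵀ * M).trace := by
  have hconj : (Vᵀ * M * V).trace = ((V * Vᵀ)ᵀ * M).trace := by
    rw [transpose_mul, transpose_transpose, trace_mul_cycle]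
  have hproj : ((V * Vᵀ)ᵀ * (V * Vᵀ)).trace = Fintype.card n := by
    rw [transpose_mul, transpose_transpose, Matrix.mul_assoc, ← Matrix.mul_assoc Vᵀ, hV,
      Matrix.one_mul, trace_mul_comm, hV, trace_one]
  simpa only [hconj, hproj] using abs_trace_transpose_mul_le (V * Vᵀ) M

lemma PosSemidef.trace_transpose_mul_mul_le [DecidableEq m] [DecidableEq n] {S : Matrix m m ℝ}
    (hS : S.PosSemidef) {V : Matrix m n ℝ} (hV : Vᵀ * V = 1) :
    (Vᵀ * S * V).trace ≤ S.trace := by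
  set Q := 1 - V * Vᵀ
  have hQ : Qᵀ = Q := by simp [Q, transpose_mul]
  have hP : V * Vᵀ * (V * Vᵀ) = V * Vᵀ := by
    rw [Matrix.mul_assoc, ← Matrix.mul_assoc Vᵀ, hV, Matrix.one_mul]
  have hQQ : Q * Q = Q := by
    simp only [Q, sub_mul, mul_sub, Matrix.one_mul, Matrix.mul_one, hP]
    abel
  have hgap : S.trace - (Vᵀ * S * V).trace = (Qᵀ * S * Q).trace := by
    rw [hQ, trace_mul_cycle Q S Q, hQQ, trace_mul_cycle Vᵀ S V, Matrix.sub_mul, Matrix.one_mul,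
      trace_sub]
  have hnonneg := (hS.conjTranspose_mul_mul_same Q).trace_nonneg
  rw [conjTranspose_eq_transpose_of_trivial] at hnonneg
  linarith

end Matrix

lemma abs_div_sub_div_le {a b c d : ℝ} (ha : 0 ≤ a) (hab : a ≤ b) (hb : 0 < b) (hd : 0 < d) :
    |a / b - c / d| ≤ (|a - c| + |b - d|) / d := by
  have hsplit : a / b - c / d = ((a - c) + a / b * (d - b)) / d := by field_simp; ring
  have hratio : |a / b| ≤ 1 := by
    rw [abs_of_nonneg (by positivity)]
    exact (div_le_one hb).2 hab
  rw [hsplit, abs_div, abs_of_pos hd]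
  gcongr
  calc |a - c + a / b * (d - b)| ≤ |a - c| + |a / b| * |d - b| := by
        rw [← abs_mul]; exact abs_add_le _ _
    _ ≤ |a - c| + |b - d| := by
        rw [abs_sub_comm d b]
        gcongr
        exact mul_le_of_le_one_left (abs_nonneg _) hratio

theorem stmt9_general {p k E : ℕ} (hE : 0 < E)
    (Sig SigHat : Fin E → Matrix (Fin p) (Fin p) ℝ)
    (hSigHat : ∀ e, (SigHat e).PosSemidef)
    (hTrHat : ∀ e, 0 < (SigHat e).trace)
    (τ : ℝ)
    (hτ : τ = Finset.univ.inf' (Finset.univ_nonempty_iff.mpr (Fin.pos_iff_nonempty.mp hE))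
      (fun e => (Sig e).trace))
    (hτpos : 0 < τ) :
    ∀ (V : Matrix (Fin p) (Fin k) ℝ), Vᵀ * V = 1 → ∀ e,
      |(Vᵀ * SigHat e * V).trace / (SigHat e).trace
          - (Vᵀ * Sig e * V).trace / (Sig e).trace|
        ≤ ((Real.sqrt k + Real.sqrt p) / τ)
            * Real.sqrt (((SigHat e - Sig e)ᵀ * (SigHat e - Sig e)).trace) := by
  intro V hV e
  set F := √((SigHat e - Sig e)ᵀ * (SigHat e - Sig e)).trace
  have hτe : τ ≤ (Sig e).trace := hτ ▸ inf'_le _ (mem_univ e)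
  have hnum : |(Vᵀ * SigHat e * V).trace - (Vᵀ * Sig e * V).trace| ≤ √k * F := by
    rw [← trace_sub, ← Matrix.sub_mul, ← Matrix.mul_sub]
    simpa only [Fintype.card_fin] using abs_trace_transpose_mul_mul_le hV (SigHat e - Sig e)
  have hden : |(SigHat e).trace - (Sig e).trace| ≤ √p * F := by
    rw [← trace_sub]
    simpa only [Fintype.card_fin] using abs_trace_le_sqrt_card_mul (SigHat e - Sig e)
  calc _ ≤ (|(Vᵀ * SigHat e * V).trace - (Vᵀ * Sig e * V).trace|
          + |(SigHat e).trace - (Sig e).trace|) / (Sig e).trace :=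
        abs_div_sub_div_le ((hSigHat e).conjTranspose_mul_mul_same V).trace_nonneg
          ((hSigHat e).trace_transpose_mul_mul_le hV) (hTrHat e) (hτpos.trans_le hτe)
    _ ≤ (√k * F + √p * F) / τ := by gcongr
    _ = _ := by ring

/-- Stability of the normalized explained variance: with `τ = min_e Tr(Σ_e) > 0`,
`|Tr(VᵀΣ̂_eV)/Tr(Σ̂_e) − Tr(VᵀΣ_eV)/Tr(Σ_e)| ≤ ((√k+√p)/τ)·‖Σ̂_e − Σ_e‖_F`. -/
theorem stmt9 {p k E : ℕ} (hE : 0 < E)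
    (Sig SigHat : Fin E → Matrix (Fin p) (Fin p) ℝ)
    (hSig : ∀ e, (Sig e).PosSemidef) (hSigHat : ∀ e, (SigHat e).PosSemidef)
    (hTrHat : ∀ e, 0 < (SigHat e).trace)
    (τ : ℝ)
    (hτ : τ = Finset.univ.inf' (Finset.univ_nonempty_iff.mpr (Fin.pos_iff_nonempty.mp hE))
      (fun e => (Sig e).trace))
    (hτpos : 0 < τ) :
    ∀ (V : Matrix (Fin p) (Fin k) ℝ), Vᵀ * V = 1 → ∀ e,
      |(Vᵀ * SigHat e * V).trace / (SigHat e).trace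
          - (Vᵀ * Sig e * V).trace / (Sig e).trace|
        ≤ ((Real.sqrt k + Real.sqrt p) / τ)
            * Real.sqrt (((SigHat e - Sig e)ᵀ * (SigHat e - Sig e)).trace) :=
  stmt9_general hE Sig SigHat hSigHat hTrHat τ hτ hτpos
end

section
/- Consider covariance matrices Σ₁ = diag(0.1, 0.9) and Σ₂ = diag(9, 1) on ℝ². The unit vector (1/√2)(1,1)ᵀ maximizes min(vᵀΣ₁v/Tr(Σ₁), vᵀΣ₂v/Tr(Σ₂)) over unit vectors v, with value 1/2, while the unit vector (0,1)ᵀ maximizes min(vᵀΣ₁v, vᵀΣ₂v) over unit vectors, with value 0.9. In particular, the maximizers of the normalized and unnormalized worst-case explained-variance objectives are distinct, as (0,1)ᵀ achieves normalized worst-case value only 0.1 and (1/√2)(1,1)ᵀ achieves unnormalized worst-case value only 0.5. -/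
/-!
Write `x = v₀²`, `y = v₁²`, so `x + y = 1` on the unit circle. Since
`Σ₁ / Tr Σ₁ + Σ₂ / Tr Σ₂ = I`, the two normalized objectives sum to `1`, so their minimum is at
most `1/2`, with equality at `x = y`. Since `Σ₁ ≤ 0.9 • I`, the unnormalized minimum is at most
`0.9`, attained at `(0, 1)`.
-/

open Matrix

theorem dotProduct_diagonal_mulVec {n R : Type*} [Fintype n] [DecidableEq n] [CommSemiring R]
    (d v : n → R) : v ⬝ᵥ diagonal d *ᵥ v = ∑ i, d i * v i ^ 2 := by
  simp only [dotProduct, mulVec_diagonal]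
  exact Finset.sum_congr rfl fun i _ => by ring

theorem dotProduct_self_fin_two {R : Type*} [CommSemiring R] (v : Fin 2 → R) :
    v ⬝ᵥ v = v 0 ^ 2 + v 1 ^ 2 := by
  simp [dotProduct, Fin.sum_univ_two, sq]

theorem isGreatest_image_of_forall_le {α β : Type*} [Preorder β] {f : α → β} {s : Set α} {a : α}
    {b : β} (ha : a ∈ s) (hfa : f a = b) (hle : ∀ x ∈ s, f x ≤ b) : IsGreatest (f '' s) b :=
  ⟨⟨a, ha, hfa⟩, by rintro _ ⟨x, hx, rfl⟩; exact hle x hx⟩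

theorem min_le_half_of_add_eq_one {a b : ℝ} (h : a + b = 1) : min a b ≤ 1 / 2 := by
  linarith [min_le_left a b, min_le_right a b]

/-- For `Σ₁ = diag(0.1, 0.9)`, `Σ₂ = diag(9, 1)`, the normalized worst-case objective
is maximized (value `1/2`) by `(1/√2)(1,1)` while the unnormalized one is maximized
(value `0.9`) by `(0,1)`; the two maximizer sets are distinct since `(0,1)` achieves
normalized value only `0.1` and `(1/√2)(1,1)` unnormalized value only `0.5`. -/
theorem stmt13 :
    IsGreatest
      ((fun v : Fin 2 → ℝ =>
          min (v ⬝ᵥ (Matrix.diagonal ![(0.1 : ℝ), 0.9]).mulVec v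
                / (Matrix.diagonal ![(0.1 : ℝ), 0.9]).trace)
              (v ⬝ᵥ (Matrix.diagonal ![(9 : ℝ), 1]).mulVec v
                / (Matrix.diagonal ![(9 : ℝ), 1]).trace))
        '' {v | v ⬝ᵥ v = 1})
      (1 / 2)
    ∧ (![1 / Real.sqrt 2, 1 / Real.sqrt 2] : Fin 2 → ℝ) ⬝ᵥ
        (![1 / Real.sqrt 2, 1 / Real.sqrt 2] : Fin 2 → ℝ) = 1
    ∧ min ((![1 / Real.sqrt 2, 1 / Real.sqrt 2] : Fin 2 → ℝ) ⬝ᵥ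
            (Matrix.diagonal ![(0.1 : ℝ), 0.9]).mulVec ![1 / Real.sqrt 2, 1 / Real.sqrt 2]
            / (Matrix.diagonal ![(0.1 : ℝ), 0.9]).trace)
          ((![1 / Real.sqrt 2, 1 / Real.sqrt 2] : Fin 2 → ℝ) ⬝ᵥ
            (Matrix.diagonal ![(9 : ℝ), 1]).mulVec ![1 / Real.sqrt 2, 1 / Real.sqrt 2]
            / (Matrix.diagonal ![(9 : ℝ), 1]).trace) = 1 / 2
    ∧ IsGreatest
        ((fun v : Fin 2 → ℝ =>
            min (v ⬝ᵥ (Matrix.diagonal ![(0.1 : ℝ), 0.9]).mulVec v)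
                (v ⬝ᵥ (Matrix.diagonal ![(9 : ℝ), 1]).mulVec v))
          '' {v | v ⬝ᵥ v = 1})
        (9 / 10)
    ∧ (![0, 1] : Fin 2 → ℝ) ⬝ᵥ (![0, 1] : Fin 2 → ℝ) = 1
    ∧ min ((![0, 1] : Fin 2 → ℝ) ⬝ᵥ
            (Matrix.diagonal ![(0.1 : ℝ), 0.9]).mulVec ![0, 1])
          ((![0, 1] : Fin 2 → ℝ) ⬝ᵥ
            (Matrix.diagonal ![(9 : ℝ), 1]).mulVec ![0, 1]) = 9 / 10
    ∧ min ((![0, 1] : Fin 2 → ℝ) ⬝ᵥ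
            (Matrix.diagonal ![(0.1 : ℝ), 0.9]).mulVec ![0, 1]
            / (Matrix.diagonal ![(0.1 : ℝ), 0.9]).trace)
          ((![0, 1] : Fin 2 → ℝ) ⬝ᵥ
            (Matrix.diagonal ![(9 : ℝ), 1]).mulVec ![0, 1]
            / (Matrix.diagonal ![(9 : ℝ), 1]).trace) = 1 / 10
    ∧ min ((![1 / Real.sqrt 2, 1 / Real.sqrt 2] : Fin 2 → ℝ) ⬝ᵥ
            (Matrix.diagonal ![(0.1 : ℝ), 0.9]).mulVec ![1 / Real.sqrt 2, 1 / Real.sqrt 2])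
          ((![1 / Real.sqrt 2, 1 / Real.sqrt 2] : Fin 2 → ℝ) ⬝ᵥ
            (Matrix.diagonal ![(9 : ℝ), 1]).mulVec ![1 / Real.sqrt 2, 1 / Real.sqrt 2])
        = 1 / 2 := by
  have hw : (1 / √2 : ℝ) ^ 2 = 1 / 2 := by rw [div_pow, one_pow, Real.sq_sqrt zero_le_two]
  simp only [dotProduct_diagonal_mulVec, dotProduct_self_fin_two, trace_diagonal, Fin.sum_univ_two,
    cons_val_zero, cons_val_one, hw]
  refine ⟨isGreatest_image_of_forall_le (a := ![1 / √2, 1 / √2]) (by norm_num [hw])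
      (by norm_num [hw]) fun v (hv : v 0 ^ 2 + v 1 ^ 2 = 1) => min_le_half_of_add_eq_one ?_,
    by norm_num, by norm_num,
    isGreatest_image_of_forall_le (a := ![0, 1]) (by norm_num) (by norm_num)
      fun v (hv : v 0 ^ 2 + v 1 ^ 2 = 1) => min_le_of_left_le ?_,
    by norm_num, by norm_num, by norm_num⟩
  · linarith
  · linarith [sq_nonneg (v 0)]
end

section
/- Let Σ₁ = (1/4)diag(2,2,0,1,1), Σ₂ = (1/4)diag(2,0,2,1,1), Σ₃ = (1/4)diag(0,2,2,1,1) be covariance matrices on ℝ⁵. Any unit vector v = (a,b,c,d,f) maximizing min_e vᵀ Σ_e v satisfies a² = b² = c² = 1/3 and d = f = 0, and the maximal value is 1/3. -/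
/-! Averaging the three covariances gives `(1/12) diag(4,4,4,3,3)`, whose quadratic form on a
unit vector is `1/3 - (d² + f²)/12`. The minimum of the three explained variances is at most
their mean, hence at most `1/3`, with equality only if `d = f = 0` and the three variances
`(a² + b²)/2`, `(a² + c²)/2`, `(b² + c²)/2` all equal `1/3`. -/

open Matrix

theorem dotProduct_smul_diagonal_mulVec {n R : Type*} [Fintype n] [DecidableEq n]
    [CommSemiring R] (c : R) (d v : n → R) :
    v ⬝ᵥ (c • diagonal d) *ᵥ v = c * ∑ i, d i * v i ^ 2 := by
  rw [smul_mulVec, dotProduct_smul, smul_eq_mul, dotProduct]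
  congr 1
  exact Finset.sum_congr rfl fun i _ => by rw [mulVec_diagonal]; ring

theorem dotProduct_self_fin_five {R : Type*} [CommSemiring R] (v : Fin 5 → R) :
    v ⬝ᵥ v = v 0 ^ 2 + v 1 ^ 2 + v 2 ^ 2 + v 3 ^ 2 + v 4 ^ 2 := by
  simp only [dotProduct, Fin.sum_univ_five, sq]

theorem three_mul_min_min_le {α : Type*} [CommSemiring α] [LinearOrder α] [IsOrderedRing α]
    (x y z : α) : 3 * min (min x y) z ≤ x + y + z :=
  calc 3 * min (min x y) z = min (min x y) z + min (min x y) z + min (min x y) z := by ring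
    _ ≤ x + y + z := add_le_add_three ((min_le_left _ _).trans (min_le_left _ _))
        ((min_le_left _ _).trans (min_le_right _ _)) (min_le_right _ _)

namespace MinPCA

noncomputable def worstCaseVariance (v : Fin 5 → ℝ) : ℝ :=
  min (min (v ⬝ᵥ (((1 : ℝ) / 4) • Matrix.diagonal ![(2 : ℝ), 2, 0, 1, 1]).mulVec v)
           (v ⬝ᵥ (((1 : ℝ) / 4) • Matrix.diagonal ![(2 : ℝ), 0, 2, 1, 1]).mulVec v))
      (v ⬝ᵥ (((1 : ℝ) / 4) • Matrix.diagonal ![(0 : ℝ), 2, 2, 1, 1]).mulVec v)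

theorem worstCaseVariance_eq (v : Fin 5 → ℝ) :
    worstCaseVariance v =
      min (min ((2 * v 0 ^ 2 + 2 * v 1 ^ 2 + v 3 ^ 2 + v 4 ^ 2) / 4)
               ((2 * v 0 ^ 2 + 2 * v 2 ^ 2 + v 3 ^ 2 + v 4 ^ 2) / 4))
          ((2 * v 1 ^ 2 + 2 * v 2 ^ 2 + v 3 ^ 2 + v 4 ^ 2) / 4) := by
  simp only [worstCaseVariance, dotProduct_smul_diagonal_mulVec, Fin.sum_univ_five,
    cons_val_zero, cons_val_one, cons_val]
  ring_nf

theorem three_mul_worstCaseVariance_le (v : Fin 5 → ℝ) :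
    3 * worstCaseVariance v ≤ v ⬝ᵥ v - (v 3 ^ 2 + v 4 ^ 2) / 4 := by
  rw [worstCaseVariance_eq, dotProduct_self_fin_five]
  linarith [three_mul_min_min_le ((2 * v 0 ^ 2 + 2 * v 1 ^ 2 + v 3 ^ 2 + v 4 ^ 2) / 4)
    ((2 * v 0 ^ 2 + 2 * v 2 ^ 2 + v 3 ^ 2 + v 4 ^ 2) / 4)
    ((2 * v 1 ^ 2 + 2 * v 2 ^ 2 + v 3 ^ 2 + v 4 ^ 2) / 4)]

theorem worstCaseVariance_le (v : Fin 5 → ℝ) (hv : v ⬝ᵥ v = 1) : worstCaseVariance v ≤ 1 / 3 := by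
  linarith [three_mul_worstCaseVariance_le v, sq_nonneg (v 3), sq_nonneg (v 4)]

theorem worstCaseVariance_balanced :
    worstCaseVariance ![√(1 / 3), √(1 / 3), √(1 / 3), 0, 0] = 1 / 3 := by
  have h : √(1 / 3 : ℝ) ^ 2 = 1 / 3 := Real.sq_sqrt (by norm_num)
  simp only [worstCaseVariance_eq, cons_val_zero, cons_val_one, cons_val_two, cons_val_three,
    cons_val_four, h]
  norm_num

theorem dotProduct_self_balanced :
    ![√(1 / 3), √(1 / 3), √(1 / 3), 0, 0] ⬝ᵥ ![√(1 / 3), √(1 / 3), √(1 / 3), 0, 0] = (1 : ℝ) := by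
  have h : √(1 / 3 : ℝ) ^ 2 = 1 / 3 := Real.sq_sqrt (by norm_num)
  simp only [dotProduct_self_fin_five, cons_val_zero, cons_val_one, cons_val_two, cons_val_three,
    cons_val_four, h]
  norm_num

theorem eq_of_worstCaseVariance_eq (v : Fin 5 → ℝ) (hv : v ⬝ᵥ v = 1)
    (hmin : worstCaseVariance v = 1 / 3) :
    v 0 ^ 2 = 1 / 3 ∧ v 1 ^ 2 = 1 / 3 ∧ v 2 ^ 2 = 1 / 3 ∧ v 3 = 0 ∧ v 4 = 0 := by
  have hsq : v 3 ^ 2 + v 4 ^ 2 = 0 :=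
    le_antisymm (by linarith [three_mul_worstCaseVariance_le v]) (by positivity)
  obtain ⟨h3, h4⟩ := (add_eq_zero_iff_of_nonneg (sq_nonneg _) (sq_nonneg _)).mp hsq
  rw [sq_eq_zero_iff] at h3 h4
  have hbound := hmin.ge
  rw [worstCaseVariance_eq, le_min_iff, le_min_iff, h3, h4] at hbound
  rw [dotProduct_self_fin_five, h3, h4] at hv
  obtain ⟨⟨h01, h02⟩, h12⟩ := hbound
  exact ⟨by linarith, by linarith, by linarith, h3, h4⟩

end MinPCA

/-- First step of the sequential-minPCA counterexample: over the three covariances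
`(1/4)diag(2,2,0,1,1)`, `(1/4)diag(2,0,2,1,1)`, `(1/4)diag(0,2,2,1,1)`, the maximal
worst-case explained variance of a unit vector is `1/3`, and any unit maximizer
`v = (a,b,c,d,f)` satisfies `a² = b² = c² = 1/3` and `d = f = 0`. -/
theorem stmt14 :
    IsGreatest
      ((fun v : Fin 5 → ℝ =>
          min (min (v ⬝ᵥ (((1 : ℝ) / 4) • Matrix.diagonal ![(2 : ℝ), 2, 0, 1, 1]).mulVec v)
                   (v ⬝ᵥ (((1 : ℝ) / 4) • Matrix.diagonal ![(2 : ℝ), 0, 2, 1, 1]).mulVec v))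
              (v ⬝ᵥ (((1 : ℝ) / 4) • Matrix.diagonal ![(0 : ℝ), 2, 2, 1, 1]).mulVec v))
        '' {v | v ⬝ᵥ v = 1})
      (1 / 3)
    ∧ ∀ v : Fin 5 → ℝ, v ⬝ᵥ v = 1 →
        min (min (v ⬝ᵥ (((1 : ℝ) / 4) • Matrix.diagonal ![(2 : ℝ), 2, 0, 1, 1]).mulVec v)
                 (v ⬝ᵥ (((1 : ℝ) / 4) • Matrix.diagonal ![(2 : ℝ), 0, 2, 1, 1]).mulVec v))
            (v ⬝ᵥ (((1 : ℝ) / 4) • Matrix.diagonal ![(0 : ℝ), 2, 2, 1, 1]).mulVec v) = 1 / 3 →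
        (v 0 ^ 2 = 1 / 3 ∧ v 1 ^ 2 = 1 / 3 ∧ v 2 ^ 2 = 1 / 3 ∧ v 3 = 0 ∧ v 4 = 0) := by
  refine ⟨⟨⟨_, MinPCA.dotProduct_self_balanced, MinPCA.worstCaseVariance_balanced⟩, ?_⟩,
    MinPCA.eq_of_worstCaseVariance_eq⟩
  rintro _ ⟨v, hv, rfl⟩
  exact MinPCA.worstCaseVariance_le v hv
end

section
/- Let X ∈ ℝ^{n×p} with Xᵀ X = I_p and rows satisfying ‖x^{(i)}‖₂ ≤ μ√(p/n) for all i. Let y ∈ ℝⁿ, let β* = Xᵀ y be the full-data OLS estimator, and for S ⊆ {1,...,n} with s := |S| let β_{−S} be the OLS estimator computed after removing the rows indexed by S. Fix ε ∈ (0,1). If s ≤ nε / (pμ²(2ε+1)), then ‖y − Xβ_{−S}‖₂² ≤ (1+ε)‖y − Xβ*‖₂². -/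
/-!
Since `XᵀX = 1`, the full-data residual `r = y - Xβ*` is orthogonal to the column space, so
`‖y - Xb‖² = ‖r‖² + ‖β* - b‖²` and it suffices to show `D := ‖β* - β₋S‖² ≤ ε‖r‖²`. With
`w = X(β* - β₋S)`, orthogonality of `r` and the normal equations of `β₋S` on the kept rows give
`D = ‖w‖² = ∑_{i ∈ S} (r i + w i) w i`. Incoherence bounds `A := ∑_{i ∈ S} w i² ≤ α D` with
`α = s μ² p / n`, and Cauchy–Schwarz gives `(D - A)² ≤ ‖r‖² A`; hence `D (1 - 2α) ≤ α ‖r‖²`,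
and `α (2ε + 1) ≤ ε` is exactly what turns this into `D ≤ ε ‖r‖²`.
-/

open Matrix Finset

lemma linear_coeff_eq_zero_of_forall_nonneg {a b : ℝ} (h : ∀ t : ℝ, 0 ≤ a * (t * t) + b * t) :
    b = 0 := by
  have := discrim_le_zero (K := ℝ) (c := 0) (by simpa using h)
  rw [discrim, mul_zero, sub_zero] at this
  exact pow_eq_zero_iff two_ne_zero |>.mp (le_antisymm this (sq_nonneg b))

lemma le_mul_of_sub_sq_le_mul {D A R α ε : ℝ} (hD : 0 ≤ D) (hR : 0 ≤ R) (hA : 0 ≤ A)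
    (hAD : A ≤ α * D) (hε : 0 ≤ ε) (hα : α * (2 * ε + 1) ≤ ε) (hsq : (D - A) ^ 2 ≤ R * A) :
    D ≤ ε * R := by
  have h1 : D * D ≤ α * D * (2 * D + R) := by
    nlinarith [mul_le_mul_of_nonneg_left hAD (by linarith : 0 ≤ 2 * D + R)]
  rcases hD.eq_or_lt with rfl | hDpos
  · positivity
  have h2 : D ≤ α * (2 * D + R) := by nlinarith
  have hα0 : 0 < α := by nlinarith
  nlinarith

section

variable {m k : Type*} [Fintype k]

lemma sq_mulVec_apply_le (A : Matrix m k ℝ) (v : k → ℝ) (i : m) :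
    (A *ᵥ v) i ^ 2 ≤ (∑ j, A i j ^ 2) * ∑ j, v j ^ 2 :=
  sum_mul_sq_le_sq_mul_sq _ _ _

lemma sum_sq_mulVec_apply_le {A : Matrix m k ℝ} {c : ℝ} (hrow : ∀ i, ∑ j, A i j ^ 2 ≤ c)
    (S : Finset m) (v : k → ℝ) :
    ∑ i ∈ S, (A *ᵥ v) i ^ 2 ≤ #S * c * ∑ j, v j ^ 2 := by
  calc ∑ i ∈ S, (A *ᵥ v) i ^ 2 ≤ ∑ i ∈ S, c * ∑ j, v j ^ 2 :=
        sum_le_sum fun i _ => (sq_mulVec_apply_le A v i).trans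
          (mul_le_mul_of_nonneg_right (hrow i) (sum_nonneg fun j _ => sq_nonneg _))
    _ = #S * c * ∑ j, v j ^ 2 := by rw [sum_const, nsmul_eq_mul, mul_assoc]

lemma sum_residual_mul_mulVec_eq_zero_of_forall_le {A : Matrix m k ℝ} {T : Finset m}
    {y : m → ℝ} {b₀ : k → ℝ}
    (hmin : ∀ b, ∑ i ∈ T, (y i - (A *ᵥ b₀) i) ^ 2 ≤ ∑ i ∈ T, (y i - (A *ᵥ b) i) ^ 2)
    (v : k → ℝ) : ∑ i ∈ T, (y i - (A *ᵥ b₀) i) * (A *ᵥ v) i = 0 := by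
  suffices -2 * ∑ i ∈ T, (y i - (A *ᵥ b₀) i) * (A *ᵥ v) i = 0 by linarith
  refine linear_coeff_eq_zero_of_forall_nonneg (a := ∑ i ∈ T, (A *ᵥ v) i ^ 2) fun t => ?_
  have := hmin (b₀ + t • v)
  simp only [mulVec_add, mulVec_smul, Pi.add_apply, Pi.smul_apply, smul_eq_mul] at this
  have hexp : ∑ i ∈ T, (y i - ((A *ᵥ b₀) i + t * (A *ᵥ v) i)) ^ 2 =
      ∑ i ∈ T, (y i - (A *ᵥ b₀) i) ^ 2 + ((∑ i ∈ T, (A *ᵥ v) i ^ 2) * (t * t) +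
        -2 * (∑ i ∈ T, (y i - (A *ᵥ b₀) i) * (A *ᵥ v) i) * t) := by
    simp only [mul_sum, sum_mul, ← sum_add_distrib]
    exact sum_congr rfl fun i _ => by ring
  linarith

variable [Fintype m] [DecidableEq k] {X : Matrix m k ℝ}

lemma sum_sq_mulVec_of_transpose_mul_self (hX : Xᵀ * X = 1) (v : k → ℝ) :
    ∑ i, (X *ᵥ v) i ^ 2 = ∑ j, v j ^ 2 := by
  simp only [sq]
  change (X *ᵥ v) ⬝ᵥ (X *ᵥ v) = v ⬝ᵥ v
  rw [dotProduct_mulVec, ← mulVec_transpose, mulVec_mulVec, hX, one_mulVec]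

lemma transpose_mulVec_residual (hX : Xᵀ * X = 1) (y : m → ℝ) :
    Xᵀ *ᵥ (y - X *ᵥ (Xᵀ *ᵥ y)) = 0 := by
  rw [mulVec_sub, mulVec_mulVec, hX, one_mulVec, sub_self]

lemma sum_residual_mul_mulVec (hX : Xᵀ * X = 1) (y : m → ℝ) (v : k → ℝ) :
    ∑ i, (y i - (X *ᵥ (Xᵀ *ᵥ y)) i) * (X *ᵥ v) i = 0 := by
  change (y - X *ᵥ (Xᵀ *ᵥ y)) ⬝ᵥ (X *ᵥ v) = 0
  rw [dotProduct_mulVec, ← mulVec_transpose, transpose_mulVec_residual hX, zero_dotProduct]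

lemma sum_sq_sub_mulVec_eq (hX : Xᵀ * X = 1) (y : m → ℝ) (b : k → ℝ) :
    ∑ i, (y i - (X *ᵥ b) i) ^ 2 =
      ∑ i, (y i - (X *ᵥ (Xᵀ *ᵥ y)) i) ^ 2 + ∑ j, ((Xᵀ *ᵥ y) j - b j) ^ 2 := by
  have hsplit : ∀ i, y i - (X *ᵥ b) i =
      (y i - (X *ᵥ (Xᵀ *ᵥ y)) i) + (X *ᵥ (Xᵀ *ᵥ y - b)) i := fun i => by
    simp only [mulVec_sub, Pi.sub_apply]; ring
  have hcross : ∑ i, 2 * (y i - (X *ᵥ (Xᵀ *ᵥ y)) i) * (X *ᵥ (Xᵀ *ᵥ y - b)) i = 0 := by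
    simp only [mul_assoc, ← mul_sum, sum_residual_mul_mulVec hX, mul_zero]
  simp only [hsplit, add_sq, sum_add_distrib, hcross, add_zero,
    sum_sq_mulVec_of_transpose_mul_self hX, Pi.sub_apply]

lemma sum_sq_sub_eq_sum_mul_of_forall_le [DecidableEq m] (hX : Xᵀ * X = 1) {y : m → ℝ}
    {S : Finset m} {b₀ : k → ℝ}
    (hmin : ∀ b, ∑ i ∈ Sᶜ, (y i - (X *ᵥ b₀) i) ^ 2 ≤ ∑ i ∈ Sᶜ, (y i - (X *ᵥ b) i) ^ 2) :
    ∑ j, (Xᵀ *ᵥ y - b₀) j ^ 2 =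
      ∑ i ∈ S, (y - X *ᵥ (Xᵀ *ᵥ y)) i * (X *ᵥ (Xᵀ *ᵥ y - b₀)) i +
        ∑ i ∈ S, (X *ᵥ (Xᵀ *ᵥ y - b₀)) i ^ 2 := by
  set r := y - X *ᵥ (Xᵀ *ᵥ y)
  set w := X *ᵥ (Xᵀ *ᵥ y - b₀)
  have hsplit : ∀ i, y i - (X *ᵥ b₀) i = r i + w i := fun i => by
    simp only [r, w, mulVec_sub, Pi.sub_apply]; ring
  have hr : ∑ i, r i * w i = 0 := sum_residual_mul_mulVec hX y _
  calc ∑ j, (Xᵀ *ᵥ y - b₀) j ^ 2 = ∑ i, w i ^ 2 :=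
        (sum_sq_mulVec_of_transpose_mul_self hX _).symm
    _ = ∑ i, (y i - (X *ᵥ b₀) i) * w i := by
        simp only [hsplit, add_mul, sum_add_distrib, hr, zero_add, sq]
    _ = ∑ i ∈ S, (y i - (X *ᵥ b₀) i) * w i := by
        rw [← sum_add_sum_compl S, sum_residual_mul_mulVec_eq_zero_of_forall_le hmin, add_zero]
    _ = ∑ i ∈ S, r i * w i + ∑ i ∈ S, w i ^ 2 := by
        simp only [hsplit, add_mul, sum_add_distrib, sq]

lemma sum_sq_sub_mulVec_le_one_add_mul [DecidableEq m] (hX : Xᵀ * X = 1) {c ε : ℝ}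
    (hrow : ∀ i, ∑ j, X i j ^ 2 ≤ c) (hε : 0 ≤ ε) {S : Finset m}
    (hS : #S * c * (2 * ε + 1) ≤ ε) {y : m → ℝ} {b₀ : k → ℝ}
    (hmin : ∀ b, ∑ i ∈ Sᶜ, (y i - (X *ᵥ b₀) i) ^ 2 ≤ ∑ i ∈ Sᶜ, (y i - (X *ᵥ b) i) ^ 2) :
    ∑ i, (y i - (X *ᵥ b₀) i) ^ 2 ≤ (1 + ε) * ∑ i, (y i - (X *ᵥ (Xᵀ *ᵥ y)) i) ^ 2 := by
  have hD := sum_sq_sub_eq_sum_mul_of_forall_le hX hmin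
  set r := y - X *ᵥ (Xᵀ *ᵥ y)
  set w := X *ᵥ (Xᵀ *ᵥ y - b₀)
  have hCS : (∑ i ∈ S, r i * w i) ^ 2 ≤ (∑ i, r i ^ 2) * ∑ i ∈ S, w i ^ 2 :=
    (sum_mul_sq_le_sq_mul_sq S r w).trans <| mul_le_mul_of_nonneg_right
      (sum_le_univ_sum_of_nonneg fun i => sq_nonneg _) (sum_nonneg fun i _ => sq_nonneg _)
  have hDR : ∑ j, (Xᵀ *ᵥ y - b₀) j ^ 2 ≤ ε * ∑ i, r i ^ 2 :=
    le_mul_of_sub_sq_le_mul (sum_nonneg fun j _ => sq_nonneg _)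
      (sum_nonneg fun i _ => sq_nonneg _) (sum_nonneg fun i _ => sq_nonneg _)
      (sum_sq_mulVec_apply_le hrow S _) hε hS (by rwa [hD, add_sub_cancel_right])
  rw [sum_sq_sub_mulVec_eq hX y b₀]
  simp only [r, Pi.sub_apply] at hDR
  linarith

end

theorem stmt17_general {n p : ℕ} (X : Matrix (Fin n) (Fin p) ℝ) (hX : Xᵀ * X = 1)
    (μ : ℝ)
    (hinc : ∀ i, Real.sqrt (∑ j, X i j ^ 2) ≤ μ * Real.sqrt ((p : ℝ) / n))
    (y : Fin n → ℝ) (S : Finset (Fin n)) (s : ℕ) (hs : S.card = s)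
    (ε : ℝ) (hε : ε ∈ Set.Ioo (0 : ℝ) 1)
    (hsize : (s : ℝ) ≤ (n : ℝ) * ε / ((p : ℝ) * μ ^ 2 * (2 * ε + 1)))
    (βm : Fin p → ℝ)
    (hβm : ∀ b : Fin p → ℝ,
      ∑ i ∈ Sᶜ, (y i - X.mulVec βm i) ^ 2 ≤ ∑ i ∈ Sᶜ, (y i - X.mulVec b i) ^ 2) :
    ∑ i, (y i - X.mulVec βm i) ^ 2
      ≤ (1 + ε) * ∑ i, (y i - X.mulVec (Xᵀ.mulVec y) i) ^ 2 := by
  obtain ⟨hε0, -⟩ := hε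
  have hrow : ∀ i, ∑ j, X i j ^ 2 ≤ μ ^ 2 * (p / n) := fun i => by
    rw [← Real.sq_sqrt (sum_nonneg fun j _ => sq_nonneg (X i j)),
      ← Real.sq_sqrt (by positivity : (0 : ℝ) ≤ p / n), ← mul_pow]
    exact pow_le_pow_left₀ (Real.sqrt_nonneg _) (hinc i) 2
  have hS : #S * (μ ^ 2 * (p / n)) * (2 * ε + 1) ≤ ε := by
    have hK : 0 ≤ (p : ℝ) * μ ^ 2 * (2 * ε + 1) := by positivity
    rw [hs, show (s : ℝ) * (μ ^ 2 * (p / n)) * (2 * ε + 1) = s * (p * μ ^ 2 * (2 * ε + 1)) / n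
      by ring]
    refine div_le_of_le_mul₀ n.cast_nonneg hε0.le ?_
    linarith [mul_le_of_le_div₀ (by positivity) hK hsize]
  exact sum_sq_sub_mulVec_le_one_add_mul hX hrow hε0.le hS hβm

/-- Stability of OLS under subset removal: if `XᵀX = I`, the rows of `X` are
`μ`-incoherent, and `s ≤ nε/(pμ²(2ε+1))`, then any OLS estimator computed after
removing the rows indexed by `S` increases the full-data squared error by at most
a factor `1 + ε`. -/
theorem stmt17 {n p : ℕ} (X : Matrix (Fin n) (Fin p) ℝ) (hX : Xᵀ * X = 1)
    (μ : ℝ) (hμ : 1 ≤ μ)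
    (hinc : ∀ i, Real.sqrt (∑ j, X i j ^ 2) ≤ μ * Real.sqrt ((p : ℝ) / n))
    (y : Fin n → ℝ) (S : Finset (Fin n)) (s : ℕ) (hs : S.card = s)
    (ε : ℝ) (hε : ε ∈ Set.Ioo (0 : ℝ) 1)
    (hsize : (s : ℝ) ≤ (n : ℝ) * ε / ((p : ℝ) * μ ^ 2 * (2 * ε + 1)))
    (βm : Fin p → ℝ)
    (hβm : ∀ b : Fin p → ℝ,
      ∑ i ∈ Sᶜ, (y i - X.mulVec βm i) ^ 2 ≤ ∑ i ∈ Sᶜ, (y i - X.mulVec b i) ^ 2) :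
    ∑ i, (y i - X.mulVec βm i) ^ 2
      ≤ (1 + ε) * ∑ i, (y i - X.mulVec (Xᵀ.mulVec y) i) ^ 2 :=
  stmt17_general X hX μ hinc y S s hs ε hε hsize βm hβm
end
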